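/- Suppose F^{-1}(p0) ≤ G^{-1}(p0) for some p0 ∈ (0,1). Then X ≤_{p0-tvar} Y if and only if E[(X-x)_+] ≤ E[(Y-x)_+] for all x ≥ F^{-1}(p0). -/

import Mathlib

open MeasureTheory Set

/-- Distribution function of a measure on ℝ. -/
noncomputable def cdfR (μ : Measure ℝ) (x : ℝ) : ℝ := (μ (Iic x)).toReal

/-- Quantile function (generalized inverse of the cdf). -/
noncomputable def quantR (μ : Measure ℝ) (p : ℝ) : ℝ := sInf {x | p ≤ cdfR μ x}

/-- Tail value at risk. -/
noncomputable def tvarR (μ : Measure ℝ) (p : ℝ) : ℝ := (1 - p)⁻¹ * ∫ u in p..1, quantR μ u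

open ProbabilityTheory Filter Topology

section aux
variable (μ : Measure ℝ) [IsProbabilityMeasure μ]

lemma cdfR_eq (x : ℝ) : cdfR μ x = cdf μ x := (cdf_eq_real μ x).symm

lemma quant_set_nonempty {p : ℝ} (hp : p < 1) : {x | p ≤ cdfR μ x}.Nonempty := by
  have h : ∀ᶠ x in atTop, p < cdf μ x := (tendsto_cdf_atTop μ).eventually_const_lt hp
  obtain ⟨x, hx⟩ := h.exists
  exact ⟨x, by rw [mem_setOf_eq, cdfR_eq]; exact hx.le⟩

lemma quant_set_bddBelow {p : ℝ} (hp : 0 < p) : BddBelow {x | p ≤ cdfR μ x} := by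
  have h : ∀ᶠ x in atBot, cdf μ x < p := (tendsto_cdf_atBot μ).eventually_lt_const hp
  obtain ⟨x0, hx0⟩ := h.exists
  refine ⟨x0, fun t ht => ?_⟩
  by_contra hlt
  push_neg at hlt
  have : cdf μ t ≤ cdf μ x0 := monotone_cdf μ hlt.le
  rw [mem_setOf_eq, cdfR_eq] at ht
  linarith

lemma quant_le_iff {p x : ℝ} (hp0 : 0 < p) (hp1 : p < 1) :
    quantR μ p ≤ x ↔ p ≤ cdfR μ x := by
  constructor
  · intro h
    rw [cdfR_eq]
    have hrc : Tendsto (cdf μ) (𝓝[>] x) (𝓝 (cdf μ x)) :=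
      ((cdf μ).right_continuous x).tendsto.mono_left (nhdsWithin_mono x Ioi_subset_Ici_self)
    refine ge_of_tendsto hrc ?_
    filter_upwards [self_mem_nhdsWithin] with y hy
    have hxy : x < y := hy
    obtain ⟨t, ht, hty⟩ := (csInf_lt_iff (quant_set_bddBelow μ hp0)
      (quant_set_nonempty μ hp1)).mp (lt_of_le_of_lt h hxy)
    rw [mem_setOf_eq, cdfR_eq] at ht
    exact ht.trans (monotone_cdf μ hty.le)
  · intro h
    exact csInf_le (quant_set_bddBelow μ hp0) h

lemma quant_mono {u v : ℝ} (h0 : 0 < u) (huv : u ≤ v) (h1 : v < 1) :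
    quantR μ u ≤ quantR μ v := by
  refine csInf_le_csInf (quant_set_bddBelow μ h0) (quant_set_nonempty μ h1) ?_
  intro t ht
  exact le_trans huv ht

end aux

noncomputable def QQ (μ : Measure ℝ) : ℝ → ℝ :=
  fun u => if u ∈ Ioo (0:ℝ) 1 then quantR μ u else 0

section mapsec
variable (μ : Measure ℝ) [IsProbabilityMeasure μ]

lemma QQ_preimage (x : ℝ) :
    QQ μ ⁻¹' Iic x = (Ioo 0 1 ∩ Iic (cdfR μ x)) ∪ ((Ioo 0 1)ᶜ ∩ {u : ℝ | (0:ℝ) ≤ x}) := by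
  ext u
  by_cases hu : u ∈ Ioo (0:ℝ) 1
  · simp only [mem_preimage, QQ, if_pos hu, mem_Iic, mem_union, mem_inter_iff, hu, true_and,
      mem_compl_iff, not_true_eq_false, false_and, or_false]
    exact quant_le_iff μ hu.1 hu.2
  · simp only [mem_preimage, QQ, if_neg hu, mem_Iic, mem_union, mem_inter_iff, hu, false_and,
      mem_compl_iff, not_false_eq_true, true_and, false_or, mem_setOf_eq, if_false]

lemma measurable_QQ : Measurable (QQ μ) := by
  refine measurable_of_Iic fun x => ?_
  rw [QQ_preimage]
  refine ((measurableSet_Ioo.inter measurableSet_Iic).union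
    (measurableSet_Ioo.compl.inter ?_))
  by_cases h : (0:ℝ) ≤ x
  · simp [h]
  · simp [h]

lemma map_QQ : Measure.map (QQ μ) (volume.restrict (Ioo 0 1)) = μ := by
  refine Measure.ext_of_Iic _ _ fun x => ?_
  rw [Measure.map_apply (measurable_QQ μ) measurableSet_Iic, Measure.restrict_apply
    ((measurable_QQ μ) measurableSet_Iic), QQ_preimage]
  have hc0 : 0 ≤ cdfR μ x := ENNReal.toReal_nonneg
  have hc1 : cdfR μ x ≤ 1 := by rw [cdfR_eq]; exact cdf_le_one μ x
  have hset : (((Ioo 0 1 ∩ Iic (cdfR μ x)) ∪ ((Ioo 0 1)ᶜ ∩ {u : ℝ | (0:ℝ) ≤ x})) ∩ Ioo 0 1)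
      = Ioo 0 1 ∩ Iic (cdfR μ x) := by
    ext u
    simp only [mem_inter_iff, mem_union, mem_compl_iff, mem_Ioo, mem_Iic, mem_setOf_eq]
    tauto
  rw [hset]
  have hsub1 : Ioo (0:ℝ) (cdfR μ x) ⊆ Ioo 0 1 ∩ Iic (cdfR μ x) := fun u hu =>
    ⟨⟨hu.1, lt_of_lt_of_le hu.2 hc1⟩, hu.2.le⟩
  have hsub2 : Ioo 0 1 ∩ Iic (cdfR μ x) ⊆ Ioc (0:ℝ) (cdfR μ x) := fun u hu =>
    ⟨hu.1.1, hu.2⟩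
  have h1 : volume (Ioo (0:ℝ) (cdfR μ x)) = ENNReal.ofReal (cdfR μ x) := by
    rw [Real.volume_Ioo, sub_zero]
  have h2 : volume (Ioc (0:ℝ) (cdfR μ x)) = ENNReal.ofReal (cdfR μ x) := by
    rw [Real.volume_Ioc, sub_zero]
  have := le_antisymm (le_trans (measure_mono hsub2) h2.le)
    (h1 ▸ measure_mono hsub1)
  rw [this, cdfR_eq, ofReal_cdf]

lemma integrable_QQ (hX : Integrable id μ) :
    Integrable (QQ μ) (volume.restrict (Ioo 0 1)) := by
  have h := (integrable_map_measure (μ := volume.restrict (Ioo (0:ℝ) 1)) (g := id)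
    (f := QQ μ) (by rw [map_QQ]; exact hX.1) (measurable_QQ μ).aemeasurable)
  rw [map_QQ] at h
  exact h.mp hX

lemma integral_comp_QQ (f : ℝ → ℝ) (hf : Measurable f) :
    ∫ y, f y ∂μ = ∫ u in Ioo (0:ℝ) 1, f (QQ μ u) := by
  rw [← map_QQ μ, integral_map (measurable_QQ μ).aemeasurable]
  rw [map_QQ]
  exact hf.aestronglyMeasurable

end mapsec

section core
variable (μ : Measure ℝ) [IsProbabilityMeasure μ]

lemma intervalIntegral_quant_eq {p : ℝ} (hp0 : 0 ≤ p) (hp1 : p ≤ 1) :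
    ∫ u in p..1, quantR μ u = ∫ u in Ioo p 1, QQ μ u := by
  rw [intervalIntegral.integral_of_le hp1, integral_Ioc_eq_integral_Ioo]
  refine setIntegral_congr_fun measurableSet_Ioo fun u hu => ?_
  have : u ∈ Ioo (0:ℝ) 1 := ⟨lt_of_le_of_lt hp0 hu.1, hu.2⟩
  rw [QQ, if_pos this]

lemma integrableOn_QQ_sub (hX : Integrable id μ) (x : ℝ) {s : Set ℝ}
    (hs : s ⊆ Ioo 0 1) : IntegrableOn (fun u => QQ μ u - x) s := by
  have h1 : IntegrableOn (QQ μ) s volume :=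
    MeasureTheory.IntegrableOn.mono_set (integrable_QQ μ hX) hs
  exact h1.sub (integrableOn_const
    (ne_of_lt (lt_of_le_of_lt (measure_mono (hs.trans Ioo_subset_Icc_self))
      (by rw [Real.volume_Icc]; exact ENNReal.ofReal_lt_top))))

lemma integrableOn_maxQQ (hX : Integrable id μ) (x : ℝ) {s : Set ℝ}
    (hs : s ⊆ Ioo 0 1) : IntegrableOn (fun u => max (QQ μ u - x) 0) s :=
  MeasureTheory.Integrable.pos_part (integrableOn_QQ_sub μ hX x hs)

lemma E_eq (x : ℝ) :
    ∫ y, max (y - x) 0 ∂μ = ∫ u in Ioo (0:ℝ) 1, max (QQ μ u - x) 0 :=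
  integral_comp_QQ μ (fun y => max (y - x) 0)
    ((measurable_id.sub_const x).max measurable_const)

lemma const_part {p : ℝ} (hp1 : p ≤ 1) (x : ℝ) :
    ∫ _ in Ioo p 1, x ∂volume = (1 - p) * x := by
  rw [setIntegral_const, Real.volume_real_Ioo_of_le hp1, smul_eq_mul]

lemma key_identity (hX : Integrable id μ) {p x : ℝ} (hp0 : 0 ≤ p) (hp1 : p ≤ 1)
    (hlow : ∀ u, 0 < u → u < p → quantR μ u ≤ x)
    (hhigh : ∀ u, p < u → u < 1 → x ≤ quantR μ u) :
    ∫ y, max (y - x) 0 ∂μ = (∫ u in p..1, quantR μ u) - (1 - p) * x := by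
  rw [E_eq, intervalIntegral_quant_eq μ hp0 hp1]
  have hs1 : Ioo (0:ℝ) p ⊆ Ioo 0 1 := fun u hu => ⟨hu.1, lt_of_lt_of_le hu.2 hp1⟩
  have hs2 : Ioo p 1 ⊆ Ioo (0:ℝ) 1 := fun u hu => ⟨lt_of_le_of_lt hp0 hu.1, hu.2⟩
  have hsplit : ∫ u in Ioo (0:ℝ) 1, max (QQ μ u - x) 0
      = (∫ u in Ioo (0:ℝ) p, max (QQ μ u - x) 0)
        + ∫ u in Ioo p 1, max (QQ μ u - x) 0 := by
    calc ∫ u in Ioo (0:ℝ) 1, max (QQ μ u - x) 0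
        = ∫ u in Ioc (0:ℝ) 1, max (QQ μ u - x) 0 :=
          (integral_Ioc_eq_integral_Ioo).symm
      _ = (∫ u in Ioc (0:ℝ) p, max (QQ μ u - x) 0)
            + ∫ u in Ioc p 1, max (QQ μ u - x) 0 := by
          rw [← Set.Ioc_union_Ioc_eq_Ioc hp0 hp1]
          exact setIntegral_union (Set.Ioc_disjoint_Ioc_of_le le_rfl) measurableSet_Ioc
            ((integrableOn_Ioc_iff_integrableOn_Ioo).mpr (integrableOn_maxQQ μ hX x hs1))
            ((integrableOn_Ioc_iff_integrableOn_Ioo).mpr (integrableOn_maxQQ μ hX x hs2))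
      _ = (∫ u in Ioo (0:ℝ) p, max (QQ μ u - x) 0)
            + ∫ u in Ioo p 1, max (QQ μ u - x) 0 := by
          rw [integral_Ioc_eq_integral_Ioo, integral_Ioc_eq_integral_Ioo]
  rw [hsplit]
  have hzero : ∫ u in Ioo (0:ℝ) p, max (QQ μ u - x) 0 = 0 := by
    rw [setIntegral_congr_fun measurableSet_Ioo (g := fun _ => (0:ℝ)) ?_, integral_zero]
    intro u hu
    have hu' : u ∈ Ioo (0:ℝ) 1 := hs1 hu
    simp only [QQ, if_pos hu']
    exact max_eq_right (by linarith [hlow u hu.1 hu.2])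
  have hmain : ∫ u in Ioo p 1, max (QQ μ u - x) 0 = ∫ u in Ioo p 1, (QQ μ u - x) := by
    refine setIntegral_congr_fun measurableSet_Ioo fun u hu => ?_
    have hu' : u ∈ Ioo (0:ℝ) 1 := hs2 hu
    simp only [QQ, if_pos hu']
    exact max_eq_left (by linarith [hhigh u hu.1 hu.2])
  rw [hzero, hmain, zero_add,
    MeasureTheory.integral_sub
      (MeasureTheory.IntegrableOn.mono_set (integrable_QQ μ hX) hs2)
      (integrableOn_const (by rw [Real.volume_Ioo]; exact ENNReal.ofReal_ne_top)),
    const_part hp1]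

lemma lower_bound (hX : Integrable id μ) {p : ℝ} (hp0 : 0 ≤ p) (hp1 : p ≤ 1) (x : ℝ) :
    (∫ u in p..1, quantR μ u) - (1 - p) * x ≤ ∫ y, max (y - x) 0 ∂μ := by
  rw [E_eq, intervalIntegral_quant_eq μ hp0 hp1]
  have hsub : Ioo p 1 ⊆ Ioo (0:ℝ) 1 := fun u hu => ⟨lt_of_le_of_lt hp0 hu.1, hu.2⟩
  have h1 : (∫ u in Ioo p 1, QQ μ u) - (1 - p) * x = ∫ u in Ioo p 1, (QQ μ u - x) := by
    rw [MeasureTheory.integral_sub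
      (MeasureTheory.IntegrableOn.mono_set (integrable_QQ μ hX) hsub)
      (integrableOn_const (by rw [Real.volume_Ioo]; exact ENNReal.ofReal_ne_top)),
      const_part hp1]
  rw [h1]
  calc ∫ u in Ioo p 1, (QQ μ u - x)
      ≤ ∫ u in Ioo p 1, max (QQ μ u - x) 0 :=
        setIntegral_mono_on (integrableOn_QQ_sub μ hX x hsub)
          (integrableOn_maxQQ μ hX x hsub) measurableSet_Ioo fun u _ => le_max_left _ _
    _ ≤ ∫ u in Ioo (0:ℝ) 1, max (QQ μ u - x) 0 :=
        setIntegral_mono_set (integrableOn_maxQQ μ hX x (subset_refl _))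
          (ae_of_all _ fun u => le_max_right _ _) (HasSubset.Subset.eventuallyLE hsub)

end core

section cont
variable (μ : Measure ℝ) [IsProbabilityMeasure μ]

lemma quant_int_eq_QQ_int {p : ℝ} (hp0 : 0 ≤ p) (hp1 : p ≤ 1) :
    ∫ u in p..1, quantR μ u = ∫ u in p..1, QQ μ u := by
  rw [intervalIntegral_quant_eq μ hp0 hp1, intervalIntegral.integral_of_le hp1,
    integral_Ioc_eq_integral_Ioo]

lemma tendsto_I (hX : Integrable id μ) {q : ℝ} (h0 : 0 ≤ q) (h1 : q < 1) :
    Tendsto (fun p => ∫ u in p..1, quantR μ u) (𝓝[>] q)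
      (𝓝 (∫ u in q..1, quantR μ u)) := by
  have hIcc : IntegrableOn (QQ μ) (uIcc (0:ℝ) 1) volume := by
    rw [uIcc_of_le zero_le_one, IntegrableOn,
      ← Measure.restrict_congr_set Ioo_ae_eq_Icc]
    exact integrable_QQ μ hX
  have hcont := intervalIntegral.continuousOn_primitive_interval_left hIcc
  have hmem : q ∈ uIcc (0:ℝ) 1 := by rw [uIcc_of_le zero_le_one]; exact ⟨h0, h1.le⟩
  have hcwa := hcont q hmem
  have ht : Tendsto (fun p => ∫ u in p..1, QQ μ u) (𝓝[>] q)
      (𝓝 (∫ u in q..1, QQ μ u)) := by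
    refine hcwa.tendsto.mono_left ?_
    rw [← nhdsWithin_Ioc_eq_nhdsGT h1]
    refine nhdsWithin_mono _ ?_
    rw [uIcc_of_le zero_le_one]
    exact fun u hu => ⟨le_trans h0 hu.1.le, hu.2⟩
  rw [quant_int_eq_QQ_int μ h0 h1.le]
  refine ht.congr' ?_
  filter_upwards [self_mem_nhdsWithin, mem_nhdsWithin_of_mem_nhds (Iio_mem_nhds h1)]
    with p hp hp1
  exact (quant_int_eq_QQ_int μ (le_trans h0 (le_of_lt hp)) (le_of_lt hp1)).symm

end cont


theorem stmt15 (μ ν : Measure ℝ) [IsProbabilityMeasure μ] [IsProbabilityMeasure ν]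
    (hX : Integrable id μ) (hY : Integrable id ν)
    (p0 : ℝ) (hp0 : p0 ∈ Set.Ioo (0:ℝ) 1)
    (hq : quantR μ p0 ≤ quantR ν p0) :
    (∀ p, p0 < p → p < 1 → tvarR μ p ≤ tvarR ν p) ↔
      (∀ x, quantR μ p0 ≤ x →
        (∫ y, max (y - x) 0 ∂μ) ≤ ∫ y, max (y - x) 0 ∂ν) := by
  obtain ⟨hp00, hp01⟩ := hp0
  constructor
  · intro h x hx
    have hdir : ∀ p, p0 < p → p < 1 →
        (∫ u in p..1, quantR μ u) ≤ ∫ u in p..1, quantR ν u := by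
      intro p hlt hp1
      have h2 := h p hlt hp1
      rw [tvarR, tvarR] at h2
      exact (mul_le_mul_iff_right₀ (inv_pos.mpr (by linarith : (0:ℝ) < 1 - p))).mp h2
    have hIineq : ∀ p, p0 ≤ p → p < 1 →
        (∫ u in p..1, quantR μ u) ≤ ∫ u in p..1, quantR ν u := by
      intro p hp hp1
      rcases eq_or_lt_of_le hp with rfl | hlt
      · refine le_of_tendsto_of_tendsto (tendsto_I μ hX (le_of_lt hp00) hp1)
          (tendsto_I ν hY (le_of_lt hp00) hp1) ?_
        filter_upwards [self_mem_nhdsWithin, mem_nhdsWithin_of_mem_nhds (Iio_mem_nhds hp1)]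
          with r hr hr1
        exact hdir r hr hr1
      · exact hdir p hlt hp1
    have hcx : p0 ≤ cdfR μ x := (quant_le_iff μ hp00 hp01).mp hx
    set c := cdfR μ x with hc
    have hc1 : c ≤ 1 := by rw [hc, cdfR_eq]; exact cdf_le_one μ x
    have hc0 : (0:ℝ) ≤ c := le_trans (le_of_lt hp00) hcx
    have hkey : ∫ y, max (y - x) 0 ∂μ = (∫ u in c..1, quantR μ u) - (1 - c) * x := by
      refine key_identity μ hX hc0 hc1 (fun u hu0 hup => ?_) (fun u hpu hu1 => ?_)
      · exact (quant_le_iff μ hu0 (lt_of_lt_of_le hup hc1)).mpr (le_of_lt hup)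
      · by_contra hcon
        push_neg at hcon
        have := (quant_le_iff μ (lt_of_le_of_lt hc0 hpu) hu1).mp hcon.le
        linarith
    rcases lt_or_eq_of_le hc1 with hc1' | hc1'
    · calc ∫ y, max (y - x) 0 ∂μ
          = (∫ u in c..1, quantR μ u) - (1 - c) * x := hkey
        _ ≤ (∫ u in c..1, quantR ν u) - (1 - c) * x := by
            have := hIineq c hcx hc1'
            linarith
        _ ≤ ∫ y, max (y - x) 0 ∂ν := lower_bound ν hY hc0 hc1 x
    · rw [hkey, hc1', intervalIntegral.integral_same, sub_self, zero_mul, sub_zero]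
      exact integral_nonneg fun y => le_max_right _ _
  · intro h p hpp hp1
    set x := quantR ν p with hxdef
    have hp0p : (0:ℝ) < p := lt_trans hp00 hpp
    have hx : quantR μ p0 ≤ x := le_trans hq (quant_mono ν hp00 hpp.le hp1)
    have hkey : ∫ y, max (y - x) 0 ∂ν = (∫ u in p..1, quantR ν u) - (1 - p) * x :=
      key_identity ν hY hp0p.le hp1.le
        (fun u hu0 hup => quant_mono ν hu0 hup.le hp1)
        (fun u hpu hu1 => quant_mono ν hp0p hpu.le hu1)
    have hlb := lower_bound μ hX hp0p.le hp1.le x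
    have hE := h x hx
    rw [tvarR, tvarR]
    have hIle : (∫ u in p..1, quantR μ u) ≤ ∫ u in p..1, quantR ν u := by
      have h3 : (∫ u in p..1, quantR μ u) - (1 - p) * x
          ≤ (∫ u in p..1, quantR ν u) - (1 - p) * x := by
        rw [← hkey]
        exact le_trans hlb hE
      linarith
    exact mul_le_mul_of_nonneg_left hIle (inv_nonneg.mpr (by linarith))
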